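/- Let W ⊆ V_d be a P-submodule. If f_0 + f_1 z + ⋯ + f_m z^m ∈ W, where f_i ∈ S^{d−i}(V_1) for each i, then f_i z^i ∈ W for all i ≥ 0. Equivalently, as k-vector spaces, W = ⊕_{i=0}^{d−1} W ∩ (S^{d−i}(V_1) ⊗ z^i). -/

import Mathlib

/-!
The `P`-module `V_d` underlying the syzygy bundle on `P^n_k` (Trivedi).
`G = GL_{n+1}(k)` and `P ⊂ G` is the maximal parabolic subgroup (block upper
triangular with blocks of sizes `1` and `n`) with `G/P ≅ P^n_k`; homogeneous
`G`-bundles on `P^n_k` correspond to finite dimensional `P`-modules.  Writing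
`U₁` for the `k`-vector space with basis `x₁, …, x_n, z` (here the variables of
`MvPolynomial (Fin (n+1)) k`, with `z` the last variable) and
`V₁ = span(x₁, …, x_n)`, the group `P` acts on `U₁` by linear substitutions
preserving `V₁`, and hence on the degree-`d` polynomials `U_d = S^d(U₁)`.  The
`P`-module corresponding to the syzygy bundle `V_d` is
`V_d = ⊕_{i=0}^{d−1} S^{d−i}(V₁) ⊗ zⁱ ⊂ U_d`.
-/

noncomputable section

open MvPolynomial

/-- The `P`-module `V_d = ⊕_{i=0}^{d-1} S^{d-i}(V₁)·zⁱ`: polynomials in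
`x₁, …, x_n, z` all of whose monomials have total degree `d` and `z`-exponent
`< d`. -/
def VdMod (k : Type) [Field k] (n d : ℕ) :
    Submodule k (MvPolynomial (Fin (n + 1)) k) where
  carrier := {f | ∀ m ∈ f.support, (∑ j, m j) = d ∧ m (Fin.last n) < d}
  add_mem' := by
    intro f g hf hg m hm
    rcases Finset.mem_union.mp (MvPolynomial.support_add hm) with h | h
    · exact hf m h
    · exact hg m h
  zero_mem' := by
    intro m hm
    simp at hm
  smul_mem' := by
    intro c f hf m hm
    exact hf m (MvPolynomial.support_smul hm)

/-- The subspace `(⋯)·zⁱ` of polynomials all of whose monomials have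
`z`-exponent exactly `i`; thus `W ⊓ zSlice k n i` is the component
`W(i) = W ∩ (S^{d-i}(V₁) ⊗ zⁱ)` of a submodule `W ≤ V_d`. -/
def zSlice (k : Type) [Field k] (n i : ℕ) :
    Submodule k (MvPolynomial (Fin (n + 1)) k) where
  carrier := {f | ∀ m ∈ f.support, m (Fin.last n) = i}
  add_mem' := by
    intro f g hf hg m hm
    rcases Finset.mem_union.mp (MvPolynomial.support_add hm) with h | h
    · exact hf m h
    · exact hg m h
  zero_mem' := by
    intro m hm
    simp at hm
  smul_mem' := by
    intro c f hf m hm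
    exact hf m (MvPolynomial.support_smul hm)

/-- A matrix `M ∈ GL_{n+1}(k)` lies in (the image in `GL(U₁)` of) the maximal
parabolic `P` iff it is invertible and each `x`-variable is mapped into the span
of the `x`-variables (the substitution sends `X i ↦ ∑ j, M i j • X j`, so this
says `M i z = 0` for every `x`-index `i`); `z` itself may be sent to
`b·z + a₁x₁ + ⋯ + a_nx_n` with `b ≠ 0`. -/
def IsParabolicSubst {k : Type} [Field k] {n : ℕ}
    (M : Matrix (Fin (n + 1)) (Fin (n + 1)) k) : Prop :=
  IsUnit M.det ∧ ∀ i : Fin (n + 1), i ≠ Fin.last n → M i (Fin.last n) = 0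

/-- The algebra endomorphism of `k[x₁, …, x_n, z]` induced by the linear
substitution `X i ↦ ∑ j, M i j • X j`. -/
def substMap {k : Type} [Field k] {n : ℕ}
    (M : Matrix (Fin (n + 1)) (Fin (n + 1)) k) :
    MvPolynomial (Fin (n + 1)) k →ₐ[k] MvPolynomial (Fin (n + 1)) k :=
  MvPolynomial.aeval fun i => ∑ j, M i j • MvPolynomial.X j

/-- `W` is a `P`-submodule of `V_d`: a `k`-subspace of `V_d` stable under all
parabolic substitutions. -/
def IsPSubmodule {k : Type} [Field k] {n : ℕ} (d : ℕ)
    (W : Submodule k (MvPolynomial (Fin (n + 1)) k)) : Prop :=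
  W ≤ VdMod k n d ∧
    ∀ M : Matrix (Fin (n + 1)) (Fin (n + 1)) k,
      IsParabolicSubst M → ∀ f ∈ W, substMap M f ∈ W

/-- The part of `f` supported on monomials with `z`-exponent exactly `i`; for
`f = f₀ + f₁z + ⋯ + fₘzᵐ ∈ V_d` with `f_i ∈ S^{d-i}(V₁)`, `zComp i f = f_i zⁱ`. -/
def zComp {k : Type} [Field k] {n : ℕ} (i : ℕ)
    (f : MvPolynomial (Fin (n + 1)) k) : MvPolynomial (Fin (n + 1)) k :=
  ∑ m ∈ f.support.filter fun m => m (Fin.last n) = i,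
    MvPolynomial.monomial m (MvPolynomial.coeff m f)

/-!
Scaling `z` by `t ≠ 0` is a parabolic substitution, and it sends
`f = ∑_{i<d} f_i zⁱ` to `∑_{i<d} tⁱ f_i zⁱ`. So for `f ∈ W` the vector-valued polynomial
`t ↦ ∑ tⁱ f_i zⁱ` takes values in `W` at the infinitely many nonzero `t` of the algebraically
closed field `k`, which forces every coefficient `f_i zⁱ` into `W`. Since `f = ∑_{i<d} f_i zⁱ`
with `f_i zⁱ ∈ W(i)`, this gives the direct sum decomposition.
-/

theorem Submodule.mem_of_forall_sum_pow_smul_mem {k M : Type*} [Field k] [Infinite k]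
    [AddCommGroup M] [Module k M] (W : Submodule k M) (w : ℕ → M) (d : ℕ)
    (h : ∀ t : k, t ≠ 0 → ∑ i ∈ Finset.range d, t ^ i • w i ∈ W) {i : ℕ} (hi : i < d) :
    w i ∈ W := by
  rw [← Submodule.Quotient.mk_eq_zero, ← Module.forall_dual_apply_eq_zero_iff k]
  intro φ
  -- `φ` turns `t ↦ ∑ tʲ • w j` into a scalar polynomial vanishing on the infinite set `k ∖ {0}`.
  set P : Polynomial k :=
    ∑ j ∈ Finset.range d, Polynomial.C (φ (W.mkQ (w j))) * Polynomial.X ^ j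
  have hP_eval (t : k) : P.eval t = φ (W.mkQ (∑ j ∈ Finset.range d, t ^ j • w j)) := by
    simp only [P, Polynomial.eval_finsetSum, Polynomial.eval_mul, Polynomial.eval_C,
      Polynomial.eval_pow, Polynomial.eval_X, map_sum, map_smul, smul_eq_mul, mul_comm]
  have hP : P = 0 := by
    refine P.eq_zero_of_infinite_isRoot ((Set.finite_singleton (0 : k)).infinite_compl.mono ?_)
    intro t ht
    simp only [Set.mem_ofPred_eq, Polynomial.IsRoot, hP_eval, W.mkQ_apply,
      (Submodule.Quotient.mk_eq_zero W).mpr (h t ht), map_zero]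
  simpa [P, Polynomial.finsetSum_coeff, Polynomial.coeff_C_mul_X_pow, hi]
    using congrArg (Polynomial.coeff · i) hP

section

variable {k : Type} [Field k] {n : ℕ}

theorem substMap_diagonal_monomial (v : Fin (n + 1) → k) (m : Fin (n + 1) →₀ ℕ) (c : k) :
    substMap (Matrix.diagonal v) (monomial m c) =
      monomial m ((m.prod fun j e => v j ^ e) * c) := by
  have hX (i : Fin (n + 1)) : ∑ j, Matrix.diagonal v i j • (X j : MvPolynomial (Fin (n + 1)) k)
      = C (v i) * X i := by
    rw [Finset.sum_eq_single i (fun j _ hj => by rw [Matrix.diagonal_apply_ne' v hj, zero_smul])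
      (by simp), Matrix.diagonal_apply_eq, smul_eq_C_mul]
  rw [substMap, aeval_monomial]
  simp only [hX, mul_pow, Finsupp.prod_mul, ← C_pow]
  rw [monomial_eq]
  simp only [Finsupp.prod]
  rw [← map_prod, algebraMap_eq, ← mul_assoc, ← C_mul, mul_comm c]

def zScale (n : ℕ) (t : k) : Matrix (Fin (n + 1)) (Fin (n + 1)) k :=
  Matrix.diagonal fun i => if i = Fin.last n then t else 1

theorem isParabolicSubst_zScale {t : k} (ht : t ≠ 0) : IsParabolicSubst (zScale n t) := by
  refine ⟨?_, fun i hi => Matrix.diagonal_apply_ne _ hi⟩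
  rw [zScale, Matrix.det_diagonal]
  exact (Finset.prod_ne_zero_iff.mpr fun i _ => by split_ifs <;> simp [ht]).isUnit

theorem substMap_zScale_monomial (t : k) (m : Fin (n + 1) →₀ ℕ) (c : k) :
    substMap (zScale n t) (monomial m c) = monomial m (t ^ m (Fin.last n) * c) := by
  rw [zScale, substMap_diagonal_monomial, Finsupp.prod_eq_single (Fin.last n)]
  · simp
  · intro j _ hj
    simp [hj]
  · simp

theorem zScale_one : zScale n (1 : k) = 1 := by
  simp [zScale, ← Matrix.diagonal_one]

theorem substMap_one (f : MvPolynomial (Fin (n + 1)) k) : substMap 1 f = f := by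
  simp [substMap, Matrix.one_apply, ite_smul]

theorem substMap_zScale_eq_sum_zComp {d : ℕ} (t : k) {f : MvPolynomial (Fin (n + 1)) k}
    (hf : f ∈ VdMod k n d) :
    substMap (zScale n t) f = ∑ i ∈ Finset.range d, t ^ i • zComp i f := by
  conv_lhs => rw [← f.support_sum_monomial_coeff, map_sum]
  simp only [substMap_zScale_monomial]
  rw [← Finset.sum_fiberwise_of_maps_to (g := fun m => m (Fin.last n))
    fun m hm => Finset.mem_range.mpr (hf m hm).2]
  refine Finset.sum_congr rfl fun i _ => ?_
  rw [zComp, Finset.smul_sum]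
  refine Finset.sum_congr rfl fun m hm => ?_
  rw [smul_monomial, (Finset.mem_filter.mp hm).2, smul_eq_mul]

theorem sum_zComp_eq_self {d : ℕ} {f : MvPolynomial (Fin (n + 1)) k} (hf : f ∈ VdMod k n d) :
    ∑ i ∈ Finset.range d, zComp i f = f := by
  simpa [zScale_one, substMap_one] using (substMap_zScale_eq_sum_zComp 1 hf).symm

theorem zComp_mem_zSlice (i : ℕ) (f : MvPolynomial (Fin (n + 1)) k) :
    zComp i f ∈ zSlice k n i := by
  intro m hm
  by_contra hne
  refine mem_support_iff.mp hm ?_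
  rw [zComp, coeff_sum]
  refine Finset.sum_eq_zero fun m' hm' => ?_
  rw [coeff_monomial, if_neg]
  rintro rfl
  exact hne (Finset.mem_filter.mp hm').2

theorem zComp_eq_zero_of_le {d i : ℕ} (hi : d ≤ i) {f : MvPolynomial (Fin (n + 1)) k}
    (hf : f ∈ VdMod k n d) : zComp i f = 0 := by
  refine Finset.sum_eq_zero fun m hm => ?_
  obtain ⟨hm_supp, rfl⟩ := Finset.mem_filter.mp hm
  exact absurd (hf m hm_supp).2 hi.not_gt

theorem IsPSubmodule.zComp_mem [Infinite k] {d : ℕ}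
    {W : Submodule k (MvPolynomial (Fin (n + 1)) k)} (hW : IsPSubmodule d W)
    {f : MvPolynomial (Fin (n + 1)) k} (hf : f ∈ W) (i : ℕ) : zComp i f ∈ W := by
  rcases le_or_gt d i with hi | hi
  · simp [zComp_eq_zero_of_le hi (hW.1 hf)]
  refine W.mem_of_forall_sum_pow_smul_mem (fun j => zComp j f) d (fun t ht => ?_) hi
  rw [← substMap_zScale_eq_sum_zComp t (hW.1 hf)]
  exact hW.2 _ (isParabolicSubst_zScale ht) f hf

end

theorem P_submodule_graded_general
    (k : Type) [Field k] [IsAlgClosed k] (n d : ℕ)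
    (W : Submodule k (MvPolynomial (Fin (n + 1)) k))
    (hW : IsPSubmodule d W) :
    (∀ f ∈ W, ∀ i : ℕ, zComp i f ∈ W) ∧
      W = ⨆ i ∈ Finset.range d, (W ⊓ zSlice k n i) := by
  refine ⟨fun f hf i => hW.zComp_mem hf i,
    le_antisymm (fun f hf => ?_) (iSup₂_le fun _ _ => inf_le_left)⟩
  rw [← sum_zComp_eq_self (hW.1 hf)]
  exact Submodule.sum_mem _ fun i hi => Submodule.mem_iSup_of_mem i <|
    Submodule.mem_iSup_of_mem hi ⟨hW.zComp_mem hf i, zComp_mem_zSlice i f⟩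

/-- Let `W ⊆ V_d` be a `P`-submodule.  If
`f = f₀ + f₁ z + ⋯ + fₘ zᵐ ∈ W` with `f_i ∈ S^{d−i}(V₁)`, then `f_i zⁱ ∈ W` for
all `i ≥ 0`; equivalently, as `k`-vector spaces,
`W = ⊕_{i=0}^{d−1} W ∩ (S^{d−i}(V₁) ⊗ zⁱ)`. -/
theorem P_submodule_graded
    (k : Type) [Field k] [IsAlgClosed k] (p n d : ℕ) [CharP k p]
    (hp : 0 < p) (hn : 2 ≤ n) (hd : 0 < d)
    (W : Submodule k (MvPolynomial (Fin (n + 1)) k))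
    (hW : IsPSubmodule d W) :
    (∀ f ∈ W, ∀ i : ℕ, zComp i f ∈ W) ∧
      W = ⨆ i ∈ Finset.range d, (W ⊓ zSlice k n i) :=
  P_submodule_graded_general k n d W hW
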